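/- arXiv:2601.13566 — 6 statements merged into one kernel-verified Lean document; each statement's English description precedes it below -/
import Mathlib

section
/- Detailed balance for Gibbs sampling over d-policies: assume σ has full support and let β > 0. Then for all d-policies π and π', X^β(π)·K^β(π,π') = X^β(π')·K^β(π',π). -/
open Finset

/-- A learning system: a commutative additive monoid `M` of stochastic policies,
a finite nonempty set `S` of contexts, a finite nonempty behavior set `A s` for each
context `s`, and an inference function `inf` assigning to each policy and context a
probability mass function on the behaviors of that context, satisfying the chain rule. -/
structure LearningSystem (M : Type) [AddCommMonoid M] (S : Type) [Fintype S] [DecidableEq S] :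
    Type where
  A : S → Finset M
  A_nonempty : ∀ s, (A s).Nonempty
  inf : M → S → M → ℝ
  inf_nonneg : ∀ φ s a, 0 ≤ inf φ s a
  inf_eq_zero_of_not_mem : ∀ φ s a, a ∉ A s → inf φ s a = 0
  inf_sum_one : ∀ φ s, ∑ a ∈ A s, inf φ s a = 1
  chain_rule : ∀ (φ : M) (s₁ s₂ : S) (a₁ a₂ : M), a₁ ∈ A s₁ → a₂ ∈ A s₂ →
    inf φ s₁ a₁ * inf (φ + a₁) s₂ a₂ = inf φ s₂ a₂ * inf (φ + a₂) s₁ a₁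

namespace LearningSystem

variable {M S : Type} [AddCommMonoid M] [Fintype S] [DecidableEq S]

/-- A deterministic policy (d-policy): an assignment of a behavior `π s ∈ A s` to
every context `s ∈ S`. -/
abbrev DPolicy (L : LearningSystem M S) : Type := ∀ s : S, {a : M // a ∈ L.A s}

/-- `σ` has full support: every behavior of every context has positive probability
under every prior policy. -/
def FullSupport (L : LearningSystem M S) : Prop :=
  ∀ (φ : M) (s : S) (a : M), a ∈ L.A s → 0 < L.inf φ s a

/-- The coherence of a d-policy `π` relative to the prior policy `φ`, computed along
the enumeration `f` of contexts:
`∑ n, log₂ σ(φ + ∑_{m<n} π(f m), f n)(π (f n))`. -/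
noncomputable def cohAlong (L : LearningSystem M S) (φ : M) (π : L.DPolicy)
    {k : ℕ} (f : Fin k → S) : ℝ :=
  ∑ n : Fin k, Real.logb 2
    (L.inf (φ + ∑ m ∈ Finset.univ.filter (fun m => m < n), ((π (f m) : M)))
      (f n) ((π (f n) : M)))

/-- The product `∏ n, σ(φ + ∑_{m<n} π(f m), f n)(π (f n))` along the enumeration `f`. -/
noncomputable def prodAlong (L : LearningSystem M S) (φ : M) (π : L.DPolicy)
    {k : ℕ} (f : Fin k → S) : ℝ :=
  ∏ n : Fin k,
    L.inf (φ + ∑ m ∈ Finset.univ.filter (fun m => m < n), ((π (f m) : M)))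
      (f n) ((π (f n) : M))

/-- The coherence `χ(π)` (relative to the zero prior policy), with respect to the fixed
enumeration `e` of the contexts. -/
noncomputable def coherence (L : LearningSystem M S) {k : ℕ} (e : Fin k ≃ S)
    (π : L.DPolicy) : ℝ :=
  L.cohAlong 0 π ⇑e

/-- The softmax over coherence at inverse temperature `β`:
`X^β(π) = 2^(β χ(π)) / ∑_{π'} 2^(β χ(π'))`. -/
noncomputable def softmaxCoh (L : LearningSystem M S) {k : ℕ} (e : Fin k ≃ S) (β : ℝ)
    (π : L.DPolicy) : ℝ :=
  (2 : ℝ) ^ (β * L.coherence e π) / ∑ π' : L.DPolicy, (2 : ℝ) ^ (β * L.coherence e π')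

/-- The tempered inference function `σ^β(φ,s)(a) = σ(φ,s)(a)^β / ∑_{a'∈A_s} σ(φ,s)(a')^β`. -/
noncomputable def sigmaBeta (L : LearningSystem M S) (β : ℝ) (φ : M) (s : S) (a : M) : ℝ :=
  L.inf φ s a ^ β / ∑ a' ∈ L.A s, L.inf φ s a' ^ β

/-- The Gibbs transition kernel on d-policies:
`K^β(π,π') = (1/k) ∑_n 1[π'(s_m) = π(s_m) ∀ m ≠ n] · σ^β(∑_{m≠n} π(s_m), s_n)(π'(s_n))`. -/
noncomputable def gibbsKernel [DecidableEq M] (L : LearningSystem M S) {k : ℕ}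
    (e : Fin k ≃ S) (β : ℝ) (π π' : L.DPolicy) : ℝ :=
  ((k : ℝ))⁻¹ * ∑ n : Fin k,
    if ∀ m : Fin k, m ≠ n → π' (e m) = π (e m) then
      L.sigmaBeta β (∑ m ∈ Finset.univ.erase n, ((π (e m) : M))) (e n) ((π' (e n) : M))
    else 0

end LearningSystem

/-!
Write `P(π)` for the product of the conditional probabilities `σ(…, sₙ)(π(sₙ))` along the
enumeration, so that `2^(β χ(π)) = P(π)^β` under full support. By the chain rule, `P(π)` does not
depend on the order of the contexts; putting `sₙ` last gives `P(π) = Q · σ(φₙ, sₙ)(π(sₙ))`, where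
`φₙ = ∑_{m ≠ n} π(sₘ)` and `Q` only involves the behaviors of `π` off `sₙ`. Hence if `π` and `π'`
agree off `sₙ`, then `P(π) σ(φₙ, sₙ)(π'(sₙ)) = P(π') σ(φₙ, sₙ)(π(sₙ))`, and raising to the power
`β` gives detailed balance for each single-site update of the Gibbs kernel, hence for its average.
-/

theorem List.ofFn_perm_map_erase_append {α : Type*} {k : ℕ} (f : Fin k → α) (n : Fin k) :
    (List.ofFn f).Perm ((Finset.univ.erase n).toList.map f ++ [f n]) := by
  rw [← Multiset.coe_eq_coe, ← Multiset.coe_add, ← Multiset.map_coe, Finset.coe_toList,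
    Finset.erase_val, Multiset.coe_singleton, ← Multiset.map_singleton, ← Multiset.map_add,
    add_comm, Multiset.singleton_add, Multiset.cons_erase (Finset.mem_univ_val n),
    Fin.univ_val_map]

namespace LearningSystem

variable {M S : Type} [AddCommMonoid M] [Fintype S] [DecidableEq S] (L : LearningSystem M S)

noncomputable def prodList (π : L.DPolicy) : M → List S → ℝ
  | _, [] => 1
  | φ, s :: l => L.inf φ s (π s) * prodList π (φ + (π s : M)) l

theorem prodList_perm (π : L.DPolicy) {l₁ l₂ : List S} (h : l₁.Perm l₂) (φ : M) :
    L.prodList π φ l₁ = L.prodList π φ l₂ := by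
  induction h generalizing φ with
  | nil => rfl
  | cons s _ ih => simp only [prodList, ih]
  | swap s t l =>
    simp only [prodList, ← mul_assoc]
    rw [L.chain_rule φ t s (π t) (π s) (π t).2 (π s).2, add_right_comm]
  | trans _ _ ih₁ ih₂ => rw [ih₁, ih₂]

theorem prodList_append (π : L.DPolicy) (l₁ l₂ : List S) (φ : M) :
    L.prodList π φ (l₁ ++ l₂) =
      L.prodList π φ l₁ * L.prodList π (φ + (l₁.map fun s => (π s : M)).sum) l₂ := by
  induction l₁ generalizing φ with
  | nil => simp [prodList]
  | cons s l ih => simp only [List.cons_append, prodList, ih, List.map_cons, List.sum_cons,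
      mul_assoc, add_assoc]

theorem prodList_congr {π π' : L.DPolicy} {l : List S} (h : ∀ s ∈ l, (π s : M) = π' s) (φ : M) :
    L.prodList π φ l = L.prodList π' φ l := by
  induction l generalizing φ with
  | nil => rfl
  | cons s l ih =>
    simp only [prodList, h s List.mem_cons_self,
      ih fun t ht => h t (List.mem_cons_of_mem s ht)]

theorem prodAlong_eq_prodList (π : L.DPolicy) {k : ℕ} (f : Fin k → S) (φ : M) :
    L.prodAlong φ π f = L.prodList π φ (List.ofFn f) := by
  induction k generalizing φ with
  | zero => simp [prodAlong, prodList]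
  | succ k ih =>
    rw [List.ofFn_succ, prodList, ← ih, prodAlong, prodAlong, Fin.prod_univ_succ]
    congr 1
    · simp
    · refine Finset.prod_congr rfl fun n _ => ?_
      simp only [Finset.sum_filter, Fin.sum_univ_succ, Fin.succ_pos, if_true,
        Fin.succ_lt_succ_iff, add_assoc]

theorem prodAlong_pos (hfs : L.FullSupport) (φ : M) (π : L.DPolicy) {k : ℕ} (f : Fin k → S) :
    0 < L.prodAlong φ π f :=
  Finset.prod_pos fun n _ => hfs _ _ _ (π (f n)).2

theorem two_rpow_mul_coherence (hfs : L.FullSupport) {k : ℕ} (e : Fin k ≃ S) (β : ℝ)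
    (π : L.DPolicy) : (2 : ℝ) ^ (β * L.coherence e π) = L.prodAlong 0 π e ^ β := by
  have hlog : L.coherence e π = Real.logb 2 (L.prodAlong 0 π e) := by
    rw [coherence, cohAlong, prodAlong,
      Real.logb_prod _ _ fun n _ => (hfs _ _ _ (π (e n)).2).ne']
  rw [hlog, mul_comm, Real.rpow_mul zero_le_two,
    Real.rpow_logb two_pos one_lt_two.ne' (L.prodAlong_pos hfs 0 π e)]

theorem softmaxCoh_eq_div (hfs : L.FullSupport) {k : ℕ} (e : Fin k ≃ S) (β : ℝ)
    (π : L.DPolicy) :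
    L.softmaxCoh e β π = L.prodAlong 0 π e ^ β / ∑ ρ : L.DPolicy, L.prodAlong 0 ρ e ^ β := by
  simp only [softmaxCoh, L.two_rpow_mul_coherence hfs]

theorem prodAlong_eq_prodList_mul_inf (φ : M) (π : L.DPolicy) {k : ℕ} (f : Fin k → S)
    (n : Fin k) :
    L.prodAlong φ π f = L.prodList π φ ((Finset.univ.erase n).toList.map f) *
      L.inf (φ + ∑ m ∈ Finset.univ.erase n, (π (f m) : M)) (f n) (π (f n)) := by
  rw [prodAlong_eq_prodList, L.prodList_perm π (List.ofFn_perm_map_erase_append f n),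
    prodList_append, List.map_map, Function.comp_def, Finset.sum_map_toList]
  simp only [prodList, mul_one]

theorem prodAlong_mul_inf_comm (φ : M) {π π' : L.DPolicy} {k : ℕ} {f : Fin k → S} {n : Fin k}
    (h : ∀ m, m ≠ n → π' (f m) = π (f m)) :
    L.prodAlong φ π f * L.inf (φ + ∑ m ∈ Finset.univ.erase n, (π (f m) : M)) (f n) (π' (f n)) =
      L.prodAlong φ π' f *
        L.inf (φ + ∑ m ∈ Finset.univ.erase n, (π (f m) : M)) (f n) (π (f n)) := by
  have hsum : ∑ m ∈ Finset.univ.erase n, (π' (f m) : M) = ∑ m ∈ Finset.univ.erase n, π (f m) :=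
    Finset.sum_congr rfl fun m hm => by rw [h m (Finset.ne_of_mem_erase hm)]
  have hrest : L.prodList π' φ ((Finset.univ.erase n).toList.map f) =
      L.prodList π φ ((Finset.univ.erase n).toList.map f) := by
    refine L.prodList_congr (fun s hs => ?_) φ
    obtain ⟨m, hm, rfl⟩ := List.mem_map.mp hs
    rw [h m (Finset.ne_of_mem_erase (Finset.mem_toList.mp hm))]
  rw [L.prodAlong_eq_prodList_mul_inf φ π f n, L.prodAlong_eq_prodList_mul_inf φ π' f n, hsum,
    hrest]
  ring

noncomputable def siteKernel [DecidableEq M] {k : ℕ} (e : Fin k ≃ S) (β : ℝ) (n : Fin k)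
    (π π' : L.DPolicy) : ℝ :=
  if ∀ m : Fin k, m ≠ n → π' (e m) = π (e m) then
    L.sigmaBeta β (∑ m ∈ Finset.univ.erase n, (π (e m) : M)) (e n) (π' (e n))
  else 0

theorem gibbsKernel_eq_sum_siteKernel [DecidableEq M] {k : ℕ} (e : Fin k ≃ S) (β : ℝ)
    (π π' : L.DPolicy) :
    L.gibbsKernel e β π π' = (k : ℝ)⁻¹ * ∑ n : Fin k, L.siteKernel e β n π π' :=
  rfl

theorem softmaxCoh_mul_siteKernel_comm [DecidableEq M] (hfs : L.FullSupport) {k : ℕ}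
    (e : Fin k ≃ S) (β : ℝ) (n : Fin k) (π π' : L.DPolicy) :
    L.softmaxCoh e β π * L.siteKernel e β n π π' =
      L.softmaxCoh e β π' * L.siteKernel e β n π' π := by
  by_cases h : ∀ m, m ≠ n → π' (e m) = π (e m)
  · have h' : ∀ m, m ≠ n → π (e m) = π' (e m) := fun m hm => (h m hm).symm
    have hsum : ∑ m ∈ Finset.univ.erase n, (π' (e m) : M) = ∑ m ∈ Finset.univ.erase n, π (e m) :=
      Finset.sum_congr rfl fun m hm => by rw [h m (Finset.ne_of_mem_erase hm)]
    have hbalance := congrArg (· ^ β) (L.prodAlong_mul_inf_comm 0 h)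
    simp only [zero_add] at hbalance
    rw [Real.mul_rpow (L.prodAlong_pos hfs 0 π e).le (L.inf_nonneg _ _ _),
      Real.mul_rpow (L.prodAlong_pos hfs 0 π' e).le (L.inf_nonneg _ _ _)] at hbalance
    rw [siteKernel, siteKernel, if_pos h, if_pos h', hsum, sigmaBeta, sigmaBeta,
      L.softmaxCoh_eq_div hfs, L.softmaxCoh_eq_div hfs, div_mul_div_comm, div_mul_div_comm,
      hbalance]
  · have h' : ¬ ∀ m, m ≠ n → π (e m) = π' (e m) := fun h' => h fun m hm => (h' m hm).symm
    rw [siteKernel, siteKernel, if_neg h, if_neg h', mul_zero, mul_zero]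

end LearningSystem

theorem gibbs_detailed_balance_general {M S : Type} [AddCommMonoid M] [DecidableEq M]
    [Fintype S] [DecidableEq S] (L : LearningSystem M S)
    (hfs : L.FullSupport) {k : ℕ} (e : Fin k ≃ S) (β : ℝ)
    (π π' : L.DPolicy) :
    L.softmaxCoh e β π * L.gibbsKernel e β π π' =
      L.softmaxCoh e β π' * L.gibbsKernel e β π' π := by
  rw [L.gibbsKernel_eq_sum_siteKernel, L.gibbsKernel_eq_sum_siteKernel,
    mul_left_comm (L.softmaxCoh e β π), mul_left_comm (L.softmaxCoh e β π')]
  congr 1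
  rw [Finset.mul_sum, Finset.mul_sum]
  exact Finset.sum_congr rfl fun n _ => L.softmaxCoh_mul_siteKernel_comm hfs e β n π π'

/-- Detailed balance for Gibbs sampling over d-policies: if `σ` has full support and
`β > 0`, then for all d-policies `π`, `π'`,
`X^β(π) · K^β(π,π') = X^β(π') · K^β(π',π)`. -/
theorem gibbs_detailed_balance {M S : Type} [AddCommMonoid M] [DecidableEq M]
    [Fintype S] [DecidableEq S] [Nonempty S] (L : LearningSystem M S)
    (hfs : L.FullSupport) {k : ℕ} (e : Fin k ≃ S) (β : ℝ) (hβ : 0 < β)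
    (π π' : L.DPolicy) :
    L.softmaxCoh e β π * L.gibbsKernel e β π π' =
      L.softmaxCoh e β π' * L.gibbsKernel e β π' π :=
  gibbs_detailed_balance_general L hfs e β π π'
end

section
/- Irreducibility of the Gibbs chain for ergodic learning systems: if the learning system is ergodic, then for every β > 0 and every pair of d-policies π, π', there exists an integer m ≥ 0 such that the m-step transition probability (K^β)^m(π,π') is strictly positive. -/
open Finset

namespace LearningSystem

variable {M S : Type} [AddCommMonoid M] [Fintype S] [DecidableEq S]

/-- The `m`-step transition probability of the Gibbs kernel. -/
noncomputable def gibbsKernelPow [DecidableEq M] (L : LearningSystem M S) {k : ℕ}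
    (e : Fin k ≃ S) (β : ℝ) : ℕ → L.DPolicy → L.DPolicy → ℝ
  | 0 => fun π π' => if π = π' then 1 else 0
  | (m + 1) => fun π π' =>
      ∑ π'' : L.DPolicy, L.gibbsKernel e β π π'' * gibbsKernelPow L e β m π'' π'

/-- The learning system is ergodic: for every nonempty proper subset `C` of the set of
d-policies there exist `π ∈ C` and `π' ∉ C` agreeing on all contexts except one context
`sdot`, with `σ(∑_{s ≠ sdot} π(s), sdot)(π'(sdot)) > 0`. -/
def Ergodic (L : LearningSystem M S) : Prop :=
  ∀ C : Set L.DPolicy, C.Nonempty → C ≠ Set.univ →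
    ∃ π ∈ C, ∃ π', π' ∉ C ∧ ∃ sdot : S,
      (∀ s : S, s ≠ sdot → π s = π' s) ∧
      0 < L.inf (∑ s ∈ Finset.univ.erase sdot, ((π s : M))) sdot ((π' sdot : M))

end LearningSystem

section Aux

variable {M S : Type} [AddCommMonoid M] [DecidableEq M] [Fintype S] [DecidableEq S]

lemma sigmaBeta_nonneg (L : LearningSystem M S) (β : ℝ) (φ : M) (s : S) (a : M) :
    0 ≤ L.sigmaBeta β φ s a := by
  unfold LearningSystem.sigmaBeta
  apply div_nonneg
  · exact Real.rpow_nonneg (L.inf_nonneg φ s a) β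
  · exact Finset.sum_nonneg fun a' _ => Real.rpow_nonneg (L.inf_nonneg φ s a') β

lemma sigmaBeta_pos (L : LearningSystem M S) (β : ℝ) (φ : M) (s : S) (a : M)
    (ha : a ∈ L.A s) (h : 0 < L.inf φ s a) : 0 < L.sigmaBeta β φ s a := by
  unfold LearningSystem.sigmaBeta
  apply div_pos (Real.rpow_pos_of_pos h β)
  apply Finset.sum_pos'
  · exact fun a' _ => Real.rpow_nonneg (L.inf_nonneg φ s a') β
  · exact ⟨a, ha, Real.rpow_pos_of_pos h β⟩

lemma gibbsKernel_nonneg (L : LearningSystem M S) {k : ℕ} (e : Fin k ≃ S) (β : ℝ)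
    (π π' : L.DPolicy) : 0 ≤ L.gibbsKernel e β π π' := by
  unfold LearningSystem.gibbsKernel
  apply mul_nonneg (by positivity)
  apply Finset.sum_nonneg
  intro n _
  split
  · exact sigmaBeta_nonneg L β _ _ _
  · exact le_refl 0

lemma gibbsKernelPow_nonneg (L : LearningSystem M S) {k : ℕ} (e : Fin k ≃ S) (β : ℝ)
    (m : ℕ) (π π' : L.DPolicy) : 0 ≤ L.gibbsKernelPow e β m π π' := by
  induction m generalizing π π' with
  | zero => unfold LearningSystem.gibbsKernelPow; split <;> norm_num
  | succ m ih =>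
    unfold LearningSystem.gibbsKernelPow
    exact Finset.sum_nonneg fun π'' _ =>
      mul_nonneg (gibbsKernel_nonneg L e β π π'') (ih π'' π')

lemma gibbsKernelPow_step (L : LearningSystem M S) {k : ℕ} (e : Fin k ≃ S) (β : ℝ)
    (m : ℕ) : ∀ (π ρ ρ' : L.DPolicy), 0 < L.gibbsKernelPow e β m π ρ →
    0 < L.gibbsKernel e β ρ ρ' → 0 < L.gibbsKernelPow e β (m + 1) π ρ' := by
  induction m with
  | zero =>
    intro π ρ ρ' h0 h1
    have hπρ : π = ρ := by
      by_contra hne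
      simp [LearningSystem.gibbsKernelPow, hne] at h0
    subst hπρ
    show 0 < ∑ π'' : L.DPolicy, L.gibbsKernel e β π π'' * L.gibbsKernelPow e β 0 π'' ρ'
    apply Finset.sum_pos'
    · intro π'' _
      exact mul_nonneg (gibbsKernel_nonneg L e β π π'')
        (gibbsKernelPow_nonneg L e β 0 π'' ρ')
    · refine ⟨ρ', Finset.mem_univ _, ?_⟩
      simpa [LearningSystem.gibbsKernelPow] using h1
  | succ m ih =>
    intro π ρ ρ' h0 h1
    have h0' : 0 < ∑ π'' : L.DPolicy,
        L.gibbsKernel e β π π'' * L.gibbsKernelPow e β m π'' ρ := h0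
    obtain ⟨π'', _, hpos⟩ : ∃ π'' ∈ (Finset.univ : Finset L.DPolicy),
        0 < L.gibbsKernel e β π π'' * L.gibbsKernelPow e β m π'' ρ := by
      by_contra hc
      push_neg at hc
      have : ∑ π'' : L.DPolicy,
          L.gibbsKernel e β π π'' * L.gibbsKernelPow e β m π'' ρ ≤ 0 :=
        Finset.sum_nonpos fun π'' h => hc π'' h
      linarith
    have hK : 0 < L.gibbsKernel e β π π'' := by
      rcases lt_or_eq_of_le (gibbsKernel_nonneg L e β π π'') with h | h
      · exact h
      · rw [← h] at hpos; simp at hpos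
    have hP : 0 < L.gibbsKernelPow e β m π'' ρ := by
      rcases lt_or_eq_of_le (gibbsKernelPow_nonneg L e β m π'' ρ) with h | h
      · exact h
      · rw [← h] at hpos; simp at hpos
    have := ih π'' ρ ρ' hP h1
    show 0 < ∑ τ : L.DPolicy,
        L.gibbsKernel e β π τ * L.gibbsKernelPow e β (m + 1) τ ρ'
    apply Finset.sum_pos'
    · intro τ _
      exact mul_nonneg (gibbsKernel_nonneg L e β π τ)
        (gibbsKernelPow_nonneg L e β (m + 1) τ ρ')
    · exact ⟨π'', Finset.mem_univ _, mul_pos hK this⟩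

lemma gibbsKernel_pos_of_single (L : LearningSystem M S) {k : ℕ} (e : Fin k ≃ S)
    [Nonempty S] (β : ℝ) (π π' : L.DPolicy) (sdot : S)
    (hagree : ∀ s : S, s ≠ sdot → π s = π' s)
    (hpos : 0 < L.inf (∑ s ∈ Finset.univ.erase sdot, ((π s : M))) sdot ((π' sdot : M))) :
    0 < L.gibbsKernel e β π π' := by
  have hk : 0 < k := by
    rcases Nat.eq_zero_or_pos k with h | h
    · exfalso; subst h; exact (e.symm (Classical.arbitrary S)).elim0
    · exact h
  unfold LearningSystem.gibbsKernel
  apply mul_pos (by positivity)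
  set n : Fin k := e.symm sdot with hn
  have hen : e n = sdot := e.apply_symm_apply sdot
  apply Finset.sum_pos'
  · intro i _
    split
    · exact sigmaBeta_nonneg L β _ _ _
    · exact le_refl 0
  · refine ⟨n, Finset.mem_univ _, ?_⟩
    have hcond : ∀ m : Fin k, m ≠ n → π' (e m) = π (e m) := by
      intro m hm
      have : e m ≠ sdot := by
        intro h
        exact hm (by rw [← hen] at h; exact e.injective h)
      exact (hagree (e m) this).symm
    rw [if_pos hcond]
    have hsum : ∑ m ∈ Finset.univ.erase n, ((π (e m) : M)) =
        ∑ s ∈ Finset.univ.erase sdot, ((π s : M)) := by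
      apply Finset.sum_nbij' (fun m => e m) (fun s => e.symm s)
      · intro m hm
        simp only [Finset.mem_erase, Finset.mem_univ, and_true] at hm ⊢
        intro h; exact hm (by rw [← hen] at h; exact e.injective h)
      · intro s hs
        simp only [Finset.mem_erase, Finset.mem_univ, and_true] at hs ⊢
        intro h
        apply hs
        rw [← hen, show s = e (e.symm s) from (e.apply_symm_apply s).symm, h]
      · intro m _; exact e.symm_apply_apply m
      · intro s _; exact e.apply_symm_apply s
      · intro m _; rfl
    rw [hsum, hen]
    exact sigmaBeta_pos L β _ sdot _ (π' sdot).2 hpos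

end Aux

/-- Irreducibility of the Gibbs chain for ergodic learning systems: if the learning
system is ergodic, then for every `β > 0` and every pair of d-policies `π`, `π'`, there
is an integer `m ≥ 0` with `(K^β)^m(π,π') > 0`. -/
theorem gibbs_irreducible_of_ergodic {M S : Type} [AddCommMonoid M] [DecidableEq M]
    [Fintype S] [DecidableEq S] [Nonempty S] (L : LearningSystem M S)
    (hErg : L.Ergodic) {k : ℕ} (e : Fin k ≃ S) (β : ℝ) (hβ : 0 < β)
    (π π' : L.DPolicy) :
    ∃ m : ℕ, 0 < L.gibbsKernelPow e β m π π' := by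
  set C : Set L.DPolicy := {ρ | ∃ m : ℕ, 0 < L.gibbsKernelPow e β m π ρ} with hC
  by_cases hu : C = Set.univ
  · have : π' ∈ C := hu ▸ Set.mem_univ π'
    exact this
  · exfalso
    have hne : C.Nonempty := ⟨π, 0, by simp [LearningSystem.gibbsKernelPow]⟩
    obtain ⟨ρ, hρ, ρ', hρ', sdot, hagree, hpos⟩ := hErg C hne hu
    obtain ⟨m, hm⟩ := hρ
    have hK : 0 < L.gibbsKernel e β ρ ρ' :=
      gibbsKernel_pos_of_single L e β ρ ρ' sdot hagree hpos
    exact hρ' ⟨m + 1, gibbsKernelPow_step L e β m π ρ ρ' hm hK⟩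
end

section
/- Gibbs sampling recovers the softmax over coherence: assume σ has full support and let β > 0. Then for every initial d-policy π₀ and every d-policy π, the Cesàro averages of the Gibbs chain started at π₀ converge to X^β: (1/(N+1))·Σ_{t=0}^{N} (K^β)^t(π₀,π) → X^β(π) as N → ∞. Equivalently, if r is sampled uniformly from {0,…,N}, the distribution of the r-th iterate of the Gibbs sampler converges to X^β as N → ∞. -/
open Finset

/-!
By the chain rule, `2 ^ χ(π)` is the probability of generating the behaviors of `π` one
context at a time, in any order. Generating the context `s` last factors it as a term that
does not depend on `π s` times `σ(∑_{t ≠ s} π t, s)(π s)`, which is exactly the weight with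
which the Gibbs sampler resamples `s`; hence `K^β` satisfies detailed balance with respect
to `X^β`, and `X^β` is stationary. Under full support, resampling the contexts in the order
of the enumeration leads from any d-policy to any other in `k` steps, so `K^β` is primitive.
Doeblin's `ℓ¹` contraction then drives every row of `(K^β)^t` to `X^β`, and the Cesàro
averages inherit the limit.
-/

open Filter Topology

namespace Matrix

variable {n : Type*} [Fintype n]

lemma vecMul_eq_self_of_detailed_balance {P : Matrix n n ℝ} (hP : ∀ i, ∑ j, P i j = 1)
    {μ : n → ℝ} (h : ∀ i j, μ i * P i j = μ j * P j i) : μ ᵥ* P = μ := by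
  ext j
  simp only [vecMul, dotProduct, h _ j, ← Finset.mul_sum, hP, mul_one]

lemma sum_abs_vecMul_le {P : Matrix n n ℝ} (hP : ∀ i, ∑ j, P i j = 1) {δ : ℝ}
    (hδ : ∀ i j, δ ≤ P i j) {v : n → ℝ} (hv : ∑ i, v i = 0) :
    ∑ j, |(v ᵥ* P) j| ≤ (1 - Fintype.card n * δ) * ∑ i, |v i| := by
  have hshift : ∀ j, (v ᵥ* P) j = ∑ i, v i * (P i j - δ) := fun j => by
    simp only [mul_sub, Finset.sum_sub_distrib, ← Finset.sum_mul, hv, zero_mul, sub_zero]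
    rfl
  calc ∑ j, |(v ᵥ* P) j| ≤ ∑ j, ∑ i, |v i| * (P i j - δ) := by
        gcongr with j
        rw [hshift]
        refine (Finset.abs_sum_le_sum_abs _ _).trans_eq (Finset.sum_congr rfl fun i _ => ?_)
        rw [abs_mul, abs_of_nonneg (sub_nonneg.2 (hδ i j))]
    _ = ∑ i, |v i| * (1 - Fintype.card n * δ) := by
        rw [Finset.sum_comm]
        simp only [← Finset.mul_sum, Finset.sum_sub_distrib, hP, Finset.sum_const,
          Finset.card_univ, nsmul_eq_mul]
    _ = (1 - Fintype.card n * δ) * ∑ i, |v i| := by rw [← Finset.sum_mul, mul_comm]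

variable [DecidableEq n]

lemma sum_vecMul_of_mem_rowStochastic {P : Matrix n n ℝ}
    (hP : P ∈ rowStochastic ℝ n) (v : n → ℝ) : ∑ j, (v ᵥ* P) j = ∑ i, v i := by
  rw [← dotProduct_one, ← dotProduct_one, ← dotProduct_mulVec, hP.2]

lemma vecMul_pow_eq_self {P : Matrix n n ℝ} {μ : n → ℝ} (hμ : μ ᵥ* P = μ)
    (t : ℕ) :
    μ ᵥ* P ^ t = μ := by
  induction t with
  | zero => simp
  | succ t ih => rw [pow_succ, ← vecMul_vecMul, ih, hμ]

lemma pow_apply_pos_of_chain {P : Matrix n n ℝ} (hP : ∀ i j, 0 ≤ P i j)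
    {ρ : ℕ → n} :
    ∀ k, (∀ t < k, 0 < P (ρ t) (ρ (t + 1))) → 0 < (P ^ k) (ρ 0) (ρ k)
  | 0, _ => by simp
  | k + 1, h => by
    rw [pow_succ, mul_apply]
    refine lt_of_lt_of_le ?_ (Finset.single_le_sum
      (fun l _ => mul_nonneg (pow_apply_nonneg hP k _ l) (hP l _)) (Finset.mem_univ (ρ k)))
    exact mul_pos (pow_apply_pos_of_chain hP k fun t ht => h t (by omega)) (h k k.lt_succ_self)

theorem IsPrimitive.tendsto_sum_abs_vecMul_pow [Nonempty n] {P : Matrix n n ℝ}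
    (hP : P.IsPrimitive) (hrow : ∀ i, ∑ j, P i j = 1) {w : n → ℝ} (hw : ∑ i, w i = 0) :
    Tendsto (fun t => ∑ j, |(w ᵥ* P ^ t) j|) atTop (𝓝 0) := by
  have hstoch : P ∈ rowStochastic ℝ n := mem_rowStochastic_iff_sum.2 ⟨hP.nonneg, hrow⟩
  obtain ⟨k, -, hpos⟩ := hP.exists_pos_pow
  obtain ⟨⟨i₀, j₀⟩, hmin⟩ := Finite.exists_min fun ij : n × n => (P ^ k) ij.1 ij.2
  set c := 1 - Fintype.card n * (P ^ k) i₀ j₀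
  have hc : c < 1 := by
    have := mul_pos (Nat.cast_pos.2 (Fintype.card_pos (α := n))) (hpos i₀ j₀)
    linarith
  set g := fun t => ∑ j, |(w ᵥ* P ^ t) j|
  have hsum : ∀ t, ∑ i, (w ᵥ* P ^ t) i = 0 := fun t => by
    rw [sum_vecMul_of_mem_rowStochastic (pow_mem hstoch t), hw]
  have hanti : Antitone g := antitone_nat_of_succ_le fun t => by
    simpa [g, pow_succ, vecMul_vecMul] using
      sum_abs_vecMul_le hrow (δ := 0) (fun i j => hP.nonneg i j) (hsum t)
  have hstep : ∀ t, g (t + k) ≤ c * g t := fun t => by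
    simpa [g, pow_add, vecMul_vecMul] using
      sum_abs_vecMul_le (sum_row_of_mem_rowStochastic (pow_mem hstoch k))
        (fun i j => hmin (i, j)) (hsum t)
  have hg : ∀ t, 0 ≤ g t := fun t => Finset.sum_nonneg fun j _ => abs_nonneg _
  have hlim := tendsto_atTop_ciInf hanti ⟨0, Set.forall_mem_range.2 hg⟩
  -- the limit `ℓ` of the antitone sequence satisfies `ℓ ≤ c ℓ` with `c < 1`
  have hle := le_of_tendsto_of_tendsto' (hlim.comp (tendsto_add_atTop_nat k))
    (hlim.const_mul c) hstep
  have hzero : ⨅ t, g t = 0 := by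
    have := le_ciInf hg
    nlinarith
  rwa [hzero] at hlim

theorem IsPrimitive.tendsto_pow_apply [Nonempty n] {P : Matrix n n ℝ}
    (hP : P.IsPrimitive) (hrow : ∀ i, ∑ j, P i j = 1) {μ : n → ℝ} (hμ : μ ᵥ* P = μ)
    (hμ1 : ∑ i, μ i = 1) (i j : n) : Tendsto (fun t => (P ^ t) i j) atTop (𝓝 (μ j)) := by
  set w : n → ℝ := Pi.single i 1 - μ
  have hw : ∑ l, w l = 0 := by
    simp [w, Finset.sum_sub_distrib, hμ1]
  have hdiff : ∀ t, (P ^ t) i j - μ j = (w ᵥ* P ^ t) j := fun t => by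
    simp [w, sub_vecMul, vecMul_pow_eq_self hμ]
  rw [← tendsto_sub_nhds_zero_iff]
  refine squeeze_zero_norm (fun t => ?_) (hP.tendsto_sum_abs_vecMul_pow hrow hw)
  rw [hdiff, Real.norm_eq_abs]
  exact Finset.single_le_sum (f := fun l => |(w ᵥ* P ^ t) l|)
    (fun l _ => abs_nonneg _) (Finset.mem_univ j)

end Matrix

lemma Fintype.sum_ite_forall_ne_eq {ι : Type*} [Fintype ι] [DecidableEq ι] {β : ι → Type*}
    [∀ i, Fintype (β i)] [∀ i, DecidableEq (β i)] (f : ∀ i, β i) (i₀ : ι)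
    (g : β i₀ → ℝ) :
    ∑ f' : ∀ i, β i, (if ∀ i, i ≠ i₀ → f' i = f i then g (f' i₀) else 0) =
      ∑ b, g b := by
  rw [← Finset.sum_filter]
  refine Finset.sum_bij' (fun f' _ => f' i₀) (fun b _ => Function.update f i₀ b)
    (fun _ _ => Finset.mem_univ _) (fun b _ => ?_) (fun f' hf' => ?_)
    (fun b _ => Function.update_self i₀ b f) (fun _ _ => rfl)
  · exact Finset.mem_filter.2 ⟨Finset.mem_univ _, fun i hi => Function.update_of_ne hi b f⟩
  · funext i
    by_cases hi : i = i₀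
    · subst hi; exact Function.update_self i (f' i) f
    · rw [Function.update_of_ne hi, (Finset.mem_filter.1 hf').2 i hi]

namespace LearningSystem

variable {M S : Type} [AddCommMonoid M] [Fintype S] [DecidableEq S] (L : LearningSystem M S)

instance : Nonempty L.DPolicy := ⟨fun s => ⟨_, (L.A_nonempty s).choose_spec⟩⟩

noncomputable def seqProb (π : L.DPolicy) : M → List S → ℝ
  | _, [] => 1
  | φ, s :: l => L.inf φ s (π s) * seqProb π (φ + π s) l

@[simp] lemma seqProb_nil (π : L.DPolicy) (φ : M) : L.seqProb π φ [] = 1 := rfl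

@[simp] lemma seqProb_cons (π : L.DPolicy) (φ : M) (s : S) (l : List S) :
    L.seqProb π φ (s :: l) = L.inf φ s (π s) * L.seqProb π (φ + π s) l := rfl

lemma seqProb_pos (hfs : L.FullSupport) (π : L.DPolicy) (l : List S) (φ : M) :
    0 < L.seqProb π φ l := by
  induction l generalizing φ with
  | nil => exact one_pos
  | cons s l ih => exact mul_pos (hfs φ s _ (π s).2) (ih _)

lemma seqProb_perm (π : L.DPolicy) {l₁ l₂ : List S} (h : l₁.Perm l₂) (φ : M) :
    L.seqProb π φ l₁ = L.seqProb π φ l₂ := by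
  induction h generalizing φ with
  | nil => rfl
  | cons s _ ih => simp [ih]
  | swap s t l =>
    simp only [seqProb_cons, ← mul_assoc]
    rw [L.chain_rule φ t s (π t) (π s) (π t).2 (π s).2, add_right_comm]
  | trans _ _ ih₁ ih₂ => rw [ih₁, ih₂]

lemma seqProb_congr {π π' : L.DPolicy} {l : List S} (h : ∀ s ∈ l, π s = π' s) (φ : M) :
    L.seqProb π φ l = L.seqProb π' φ l := by
  induction l generalizing φ with
  | nil => rfl
  | cons s l ih =>
    simp only [seqProb_cons, h s List.mem_cons_self,
      ih fun t ht => h t (List.mem_cons_of_mem _ ht)]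

lemma seqProb_append_singleton (π : L.DPolicy) (l : List S) (φ : M) (s : S) :
    L.seqProb π φ (l ++ [s]) =
      L.seqProb π φ l * L.inf (φ + (l.map fun t => (π t : M)).sum) s (π s) := by
  induction l generalizing φ with
  | nil => simp
  | cons t l ih => simp only [List.cons_append, seqProb_cons, List.map_cons, List.sum_cons,
      ih, mul_assoc, add_assoc]

lemma seqProb_eq_mul_erase (π : L.DPolicy) {l : List S} {s : S} (hs : s ∈ l) (φ : M) :
    L.seqProb π φ l =
      L.seqProb π φ (l.erase s) *
        L.inf (φ + ((l.erase s).map fun t => (π t : M)).sum) s (π s) := by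
  rw [← seqProb_append_singleton,
    L.seqProb_perm π ((List.perm_cons_erase hs).trans (List.perm_append_singleton _ _).symm)]

lemma prodAlong_eq_seqProb (π : L.DPolicy) {k : ℕ} (f : Fin k → S) (φ : M) :
    L.prodAlong φ π f = L.seqProb π φ (List.ofFn f) := by
  induction k generalizing φ with
  | zero => simp [prodAlong]
  | succ k ih =>
    have hsum : ∀ (n : Fin k) (g : Fin (k + 1) → M),
        ∑ m ∈ Finset.univ.filter (· < n.succ), g m
          = g 0 + ∑ m ∈ Finset.univ.filter (· < n), g m.succ := fun n g => by
      rw [Finset.sum_filter, Finset.sum_filter, Fin.sum_univ_succ]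
      simp [Fin.succ_pos]
    rw [List.ofFn_succ, seqProb_cons, ← ih (fun i => f i.succ), prodAlong, prodAlong,
      Fin.prod_univ_succ]
    congr 1
    · simp
    · exact Finset.prod_congr rfl fun n _ => by rw [hsum, ← add_assoc]

lemma two_rpow_coherence (hfs : L.FullSupport) {k : ℕ} (e : Fin k ≃ S) (π : L.DPolicy) :
    (2 : ℝ) ^ L.coherence e π = L.seqProb π 0 (List.ofFn e) := by
  have hpos : 0 < L.prodAlong 0 π e := L.prodAlong_eq_seqProb π e 0 ▸ L.seqProb_pos hfs π _ 0
  have hlog : L.coherence e π = Real.logb 2 (L.prodAlong 0 π e) := by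
    rw [coherence, cohAlong, prodAlong, Real.logb_prod]
    exact fun n _ => (hfs _ _ _ (π (e n)).2).ne'
  rw [hlog, Real.rpow_logb two_pos (by norm_num) hpos, prodAlong_eq_seqProb]

lemma two_rpow_coherence_eq_mul (hfs : L.FullSupport) {k : ℕ} (e : Fin k ≃ S)
    (π : L.DPolicy) (n : Fin k) :
    (2 : ℝ) ^ L.coherence e π = L.seqProb π 0 ((List.ofFn e).erase (e n)) *
      L.inf (∑ m ∈ Finset.univ.erase n, (π (e m) : M)) (e n) (π (e n)) := by
  have hnd : (List.ofFn e).Nodup := List.nodup_ofFn.2 e.injective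
  have hsum : (((List.ofFn e).erase (e n)).map fun t => (π t : M)).sum =
      ∑ m ∈ Finset.univ.erase n, (π (e m) : M) := by
    rw [← List.sum_toFinset _ (hnd.erase _)]
    refine Finset.sum_equiv e.symm (fun s => ?_) fun s _ => by rw [e.apply_symm_apply]
    simp [hnd.mem_erase_iff, List.mem_ofFn, e.symm_apply_eq, e.surjective s]
  rw [L.two_rpow_coherence hfs, L.seqProb_eq_mul_erase π (List.mem_ofFn.2 ⟨n, rfl⟩), zero_add,
    hsum]

lemma sum_inf_rpow_pos (hfs : L.FullSupport) (β : ℝ) (φ : M) (s : S) :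
    0 < ∑ a ∈ L.A s, L.inf φ s a ^ β :=
  Finset.sum_pos (fun a ha => Real.rpow_pos_of_pos (hfs φ s a ha) β) (L.A_nonempty s)

lemma sigmaBeta_nonneg (β : ℝ) (φ : M) (s : S) (a : M) : 0 ≤ L.sigmaBeta β φ s a :=
  div_nonneg (Real.rpow_nonneg (L.inf_nonneg φ s a) β)
    (Finset.sum_nonneg fun a' _ => Real.rpow_nonneg (L.inf_nonneg φ s a') β)

lemma sigmaBeta_pos (hfs : L.FullSupport) (β : ℝ) (φ : M) {s : S} {a : M} (ha : a ∈ L.A s) :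
    0 < L.sigmaBeta β φ s a :=
  div_pos (Real.rpow_pos_of_pos (hfs φ s a ha) β) (L.sum_inf_rpow_pos hfs β φ s)

lemma sum_sigmaBeta (hfs : L.FullSupport) (β : ℝ) (φ : M) (s : S) :
    ∑ b : {a : M // a ∈ L.A s}, L.sigmaBeta β φ s b = 1 := by
  rw [Finset.sum_coe_sort (L.A s) (L.sigmaBeta β φ s)]
  simp only [sigmaBeta, ← Finset.sum_div]
  exact div_self (L.sum_inf_rpow_pos hfs β φ s).ne'

lemma sum_softmaxCoh {k : ℕ} (e : Fin k ≃ S) (β : ℝ) :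
    ∑ π, L.softmaxCoh e β π = 1 := by
  simp only [softmaxCoh, ← Finset.sum_div]
  exact div_self
    (Finset.sum_pos (fun _ _ => Real.rpow_pos_of_pos two_pos _) Finset.univ_nonempty).ne'

variable {k : ℕ} (e : Fin k ≃ S) (β : ℝ)

lemma two_rpow_mul_sigmaBeta_symm (hfs : L.FullSupport) {π π' : L.DPolicy} {n : Fin k}
    (h : ∀ m, m ≠ n → π' (e m) = π (e m)) :
    (2 : ℝ) ^ (β * L.coherence e π) *
        L.sigmaBeta β (∑ m ∈ Finset.univ.erase n, (π (e m) : M)) (e n) (π' (e n)) =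
      (2 : ℝ) ^ (β * L.coherence e π') *
        L.sigmaBeta β (∑ m ∈ Finset.univ.erase n, (π' (e m) : M)) (e n) (π (e n)) := by
  have hφ : ∑ m ∈ Finset.univ.erase n, (π' (e m) : M) =
      ∑ m ∈ Finset.univ.erase n, (π (e m) : M) :=
    Finset.sum_congr rfl fun m hm => by rw [h m (Finset.ne_of_mem_erase hm)]
  have hR : L.seqProb π' 0 ((List.ofFn e).erase (e n)) =
      L.seqProb π 0 ((List.ofFn e).erase (e n)) := by
    refine L.seqProb_congr (fun s hs => ?_) 0
    obtain ⟨m, rfl⟩ := e.surjective s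
    exact h m fun hm => ((List.nodup_ofFn.2 e.injective).mem_erase_iff.1 hs).1 (hm ▸ rfl)
  have hpos := L.seqProb_pos hfs
  rw [mul_comm β, mul_comm β, Real.rpow_mul two_pos.le, Real.rpow_mul two_pos.le,
    L.two_rpow_coherence_eq_mul hfs e π n, L.two_rpow_coherence_eq_mul hfs e π' n, hφ, hR,
    sigmaBeta, sigmaBeta, Real.mul_rpow (hpos _ _ _).le (L.inf_nonneg _ _ _),
    Real.mul_rpow (hpos _ _ _).le (L.inf_nonneg _ _ _)]
  ring

variable [DecidableEq M]

lemma gibbsKernel_nonneg (π π' : L.DPolicy) : 0 ≤ L.gibbsKernel e β π π' :=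
  mul_nonneg (inv_nonneg.2 k.cast_nonneg) (Finset.sum_nonneg fun _ _ => by
    split_ifs
    exacts [L.sigmaBeta_nonneg _ _ _ _, le_rfl])

lemma gibbsKernel_pos_of_eq_off (hfs : L.FullSupport) {π π' : L.DPolicy} (n : Fin k)
    (h : ∀ m, m ≠ n → π' (e m) = π (e m)) : 0 < L.gibbsKernel e β π π' := by
  refine mul_pos (inv_pos.2 (Nat.cast_pos.2 n.pos))
    (Finset.sum_pos' (fun m _ => ?_) ⟨n, Finset.mem_univ _, ?_⟩)
  · split_ifs
    exacts [L.sigmaBeta_nonneg _ _ _ _, le_rfl]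
  · rw [if_pos h]
    exact L.sigmaBeta_pos hfs β _ (π' (e n)).2

lemma sum_gibbsKernel (hfs : L.FullSupport) (hk : k ≠ 0) (π : L.DPolicy) :
    ∑ π', L.gibbsKernel e β π π' = 1 := by
  have hterm : ∀ n : Fin k, ∑ π' : L.DPolicy,
      (if ∀ m, m ≠ n → π' (e m) = π (e m) then
        L.sigmaBeta β (∑ m ∈ Finset.univ.erase n, (π (e m) : M)) (e n) (π' (e n))
      else 0) = 1 := by
    intro n
    rw [← L.sum_sigmaBeta hfs β _ (e n), ← Fintype.sum_ite_forall_ne_eq π (e n)]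
    refine Finset.sum_congr rfl fun π' _ => if_congr ?_ rfl rfl
    rw [← e.forall_congr_right]
    simp only [e.injective.ne_iff]
  simp only [gibbsKernel, ← Finset.mul_sum]
  rw [Finset.sum_comm, Finset.sum_congr rfl fun n _ => hterm n]
  simp [hk]

lemma softmaxCoh_mul_gibbsKernel_comm (hfs : L.FullSupport) (π π' : L.DPolicy) :
    L.softmaxCoh e β π * L.gibbsKernel e β π π' =
      L.softmaxCoh e β π' * L.gibbsKernel e β π' π := by
  simp only [softmaxCoh, gibbsKernel, div_mul_eq_mul_div, mul_left_comm _ ((k : ℝ)⁻¹),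
    Finset.mul_sum]
  refine Finset.sum_congr rfl fun n _ => ?_
  by_cases h : ∀ m, m ≠ n → π' (e m) = π (e m)
  · rw [if_pos h, if_pos fun m hm => (h m hm).symm, L.two_rpow_mul_sigmaBeta_symm e β hfs h]
  · rw [if_neg h, if_neg fun h' => h fun m hm => (h' m hm).symm, mul_zero, mul_zero]

lemma gibbsKernelPow_eq_pow (t : ℕ) :
    L.gibbsKernelPow e β t =
      (Matrix.of (L.gibbsKernel e β) ^ t : Matrix L.DPolicy L.DPolicy ℝ) := by
  induction t with
  | zero => funext π π'; simp [gibbsKernelPow, Matrix.one_apply]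
  | succ t ih => funext π π'; rw [pow_succ', Matrix.mul_apply, gibbsKernelPow, ih]; rfl

lemma gibbsKernel_pow_pos (hfs : L.FullSupport) (π π' : L.DPolicy) :
    0 < (Matrix.of (L.gibbsKernel e β) ^ k) π π' := by
  -- resample the contexts in the order of `e`, switching from `π` to `π'` one at a time
  let ρ : ℕ → L.DPolicy := fun t s => if (e.symm s : ℕ) < t then π' s else π s
  have hρ0 : ρ 0 = π := by funext s; simp [ρ]
  have hρk : ρ k = π' := by funext s; simp [ρ, (e.symm s).is_lt]
  have := Matrix.pow_apply_pos_of_chain (L.gibbsKernel_nonneg e β) (ρ := ρ) k fun t ht =>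
    L.gibbsKernel_pos_of_eq_off e β hfs ⟨t, ht⟩ fun m hm => by
      have : (m : ℕ) ≠ t := fun h => hm (Fin.ext h)
      simp only [ρ, Equiv.symm_apply_apply]
      split_ifs <;> first | rfl | omega
  rwa [hρ0, hρk] at this

lemma isPrimitive_gibbsKernel (hfs : L.FullSupport) (hk : 0 < k) :
    (Matrix.of (L.gibbsKernel e β)).IsPrimitive :=
  ⟨L.gibbsKernel_nonneg e β, k, hk, L.gibbsKernel_pow_pos e β hfs⟩

end LearningSystem

theorem gibbs_recovers_softmax_general {M S : Type} [AddCommMonoid M] [DecidableEq M]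
    [Fintype S] [DecidableEq S] [Nonempty S] (L : LearningSystem M S)
    (hfs : L.FullSupport) {k : ℕ} (e : Fin k ≃ S) (β : ℝ)
    (π₀ π : L.DPolicy) :
    Filter.Tendsto
      (fun N : ℕ => ((N : ℝ) + 1)⁻¹ *
        ∑ t ∈ Finset.range (N + 1), L.gibbsKernelPow e β t π₀ π)
      Filter.atTop (nhds (L.softmaxCoh e β π)) := by
  have hk : 0 < k := (e.symm (Classical.arbitrary S)).pos
  have hrow := L.sum_gibbsKernel e β hfs hk.ne'
  have hstat := Matrix.vecMul_eq_self_of_detailed_balance hrow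
    (L.softmaxCoh_mul_gibbsKernel_comm e β hfs)
  have hconv := (L.isPrimitive_gibbsKernel e β hfs hk).tendsto_pow_apply hrow hstat
    (L.sum_softmaxCoh e β) π₀ π
  simp_rw [L.gibbsKernelPow_eq_pow e β]
  simpa [Function.comp_def] using hconv.cesaro.comp (tendsto_add_atTop_nat 1)

/-- Gibbs sampling recovers the softmax over coherence: if `σ` has full support and
`β > 0`, then for every initial d-policy `π₀` and every d-policy `π`, the Cesàro
averages of the Gibbs chain started at `π₀` converge to `X^β`:
`(1/(N+1)) ∑_{t=0}^{N} (K^β)^t(π₀,π) → X^β(π)` as `N → ∞`; equivalently, the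
distribution of the `r`-th iterate with `r` uniform on `{0,…,N}` converges to `X^β`. -/
theorem gibbs_recovers_softmax {M S : Type} [AddCommMonoid M] [DecidableEq M]
    [Fintype S] [DecidableEq S] [Nonempty S] (L : LearningSystem M S)
    (hfs : L.FullSupport) {k : ℕ} (e : Fin k ≃ S) (β : ℝ) (hβ : 0 < β)
    (π₀ π : L.DPolicy) :
    Filter.Tendsto
      (fun N : ℕ => ((N : ℝ) + 1)⁻¹ *
        ∑ t ∈ Finset.range (N + 1), L.gibbsKernelPow e β t π₀ π)
      Filter.atTop (nhds (L.softmaxCoh e β π)) :=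
  gibbs_recovers_softmax_general L hfs e β π₀ π
end

section
/- Coherence regularization corollary: assume σ has full support and let δ ∈ (0,1). For any nonempty set R of d-policies, define π̂ as a maximizer over π ∈ R of α_train(π;π*) − √((−2χ(π) + log₂ e + log₂(1/δ))/(2N)) and π̄ as a maximizer over π ∈ R of α(π;π*). Then with probability at least 1−δ over the i.i.d. uniform draw of the training contexts, α(π̂;π*) ≥ α(π̄;π*) − 2·√((2·max(−χ(π̂), −χ(π̄)) + log₂ e + log₂(1/δ))/(2N)). -/
open Finset

namespace LearningSystem

variable {M S : Type} [AddCommMonoid M] [Fintype S] [DecidableEq S]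

/-- Accuracy of `π` with respect to the ground truth `πs`:
`α(π;π*) = (1/|S|) ∑_{s∈S} 1[π(s) = π*(s)]`. -/
noncomputable def accuracy [DecidableEq M] (L : LearningSystem M S)
    (π πs : L.DPolicy) : ℝ :=
  (∑ s : S, if (π s : M) = ((πs s : M)) then (1 : ℝ) else 0) / (Fintype.card S : ℝ)

/-- Training accuracy of `π` on the training contexts `shat`:
`α_train(π;π*) = (1/N) ∑_i 1[π(ŝ_i) = π*(ŝ_i)]`. -/
noncomputable def trainAccuracy [DecidableEq M] (L : LearningSystem M S) {N : ℕ}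
    (shat : Fin N → S) (π πs : L.DPolicy) : ℝ :=
  (∑ i : Fin N, if (π (shat i) : M) = ((πs (shat i) : M)) then (1 : ℝ) else 0) / (N : ℝ)

end LearningSystem

/-!
The weights `2 ^ χ(π) = ∏ₙ σ(…)(π(sₙ))` of the d-policies sum to `1`: summing out the behaviours
one context at a time, each factor is a probability mass function. They therefore act as an Occam
prior. By Hoeffding's inequality the training accuracy of `π` deviates from its accuracy by more
than the confidence radius `ε(π)` with probability at most `2 exp(-2Nε(π)²) ≤ δ 2 ^ χ(π)`, so by a
union bound every policy is within its radius simultaneously with probability at least `1 - δ`.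
On that event `α(π̂) ≥ α_train(π̂) - ε(π̂) ≥ α_train(π̄) - ε(π̄) ≥ α(π̄) - 2ε(π̄)`, and `ε(π̄)` is
at most the radius belonging to `min(χ(π̂), χ(π̄))`.
-/

open MeasureTheory ProbabilityTheory

theorem Fin.sum_filter_lt_succ {A : Type*} [AddCommMonoid A] {k : ℕ}
    (g : Fin (k + 1) → A) (n : Fin k) :
    ∑ m ∈ univ.filter (· < n.succ), g m = g 0 + ∑ m ∈ univ.filter (· < n), g m.succ := by
  simp [sum_filter, Fin.sum_univ_succ, Fin.succ_lt_succ_iff, Fin.succ_pos]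

namespace LearningSystem

variable {M S : Type} [AddCommMonoid M] [Fintype S] [DecidableEq S] (L : LearningSystem M S)

theorem inf_le_one (φ : M) (s : S) {a : M} (ha : a ∈ L.A s) : L.inf φ s a ≤ 1 :=
  L.inf_sum_one φ s ▸ single_le_sum (fun b _ => L.inf_nonneg φ s b) ha

theorem coherence_nonpos {k : ℕ} (e : Fin k ≃ S) (π : L.DPolicy) : L.coherence e π ≤ 0 :=
  show L.cohAlong 0 π e ≤ 0 from sum_nonpos fun n _ =>
    Real.logb_nonpos one_lt_two (L.inf_nonneg _ _ _) (L.inf_le_one _ _ (π (e n)).2)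

theorem two_rpow_cohAlong (hfs : L.FullSupport) (φ : M) (π : L.DPolicy) {k : ℕ}
    (f : Fin k → S) : (2 : ℝ) ^ L.cohAlong φ π f = L.prodAlong φ π f := by
  rw [cohAlong, Real.rpow_sum_of_pos two_pos]
  exact prod_congr rfl fun n _ =>
    Real.rpow_logb two_pos (by norm_num) (hfs _ _ _ (π (f n)).2)

theorem sum_prod_inf_eq_one : ∀ {k : ℕ} (t : Fin k → S) (φ : M),
    ∑ v : (∀ n, {a : M // a ∈ L.A (t n)}),
      ∏ n, L.inf (φ + ∑ m ∈ univ.filter (· < n), (v m : M)) (t n) (v n) = 1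
  | 0, _, _ => by simp
  | k + 1, t, φ => by
    -- The first factor is a pmf in the first behaviour `a`; the rest is the same sum with
    -- prior `φ + a`.
    rw [← (Fin.consEquiv _).sum_comp, Fintype.sum_prod_type]
    calc _ = ∑ a : {a : M // a ∈ L.A (t 0)}, L.inf φ (t 0) a *
          ∑ w : (∀ n : Fin k, {a : M // a ∈ L.A (t n.succ)}), ∏ n : Fin k,
            L.inf (φ + a + ∑ m ∈ univ.filter (· < n), (w m : M)) (t n.succ) (w n) := by
          refine sum_congr rfl fun a _ => ?_
          rw [mul_sum]
          refine sum_congr rfl fun w _ => ?_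
          simp [Fin.consEquiv, Fin.prod_univ_succ, Fin.sum_filter_lt_succ, add_assoc]
      _ = ∑ a ∈ L.A (t 0), L.inf φ (t 0) a := by
          simp only [sum_prod_inf_eq_one, mul_one]
          exact sum_coe_sort _ _
      _ = 1 := L.inf_sum_one φ (t 0)

theorem sum_prodAlong_eq_one (φ : M) {k : ℕ} (e : Fin k ≃ S) :
    ∑ π : L.DPolicy, L.prodAlong φ π e = 1 := by
  rw [← (Equiv.piCongrLeft (fun s => {a : M // a ∈ L.A s}) e).sum_comp,
    ← L.sum_prod_inf_eq_one e φ]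
  simp [prodAlong]

theorem sum_two_rpow_coherence (hfs : L.FullSupport) {k : ℕ} (e : Fin k ≃ S) :
    ∑ π : L.DPolicy, (2 : ℝ) ^ L.coherence e π = 1 := by
  simp only [coherence, L.two_rpow_cohAlong hfs]
  exact L.sum_prodAlong_eq_one 0 e

end LearningSystem

theorem measureReal_pi_sum_ge_le {S : Type*} [MeasurableSpace S] {ν : Measure S}
    [IsProbabilityMeasure ν] {Z : S → ℝ} {c : NNReal} (hZ : HasSubgaussianMGF Z c ν) (N : ℕ)
    {t : ℝ} (ht : 0 ≤ t) :
    (Measure.pi fun _ : Fin N => ν).real {ω | t ≤ ∑ i, Z (ω i)} ≤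
      Real.exp (-t ^ 2 / (2 * N * c)) := by
  have hindep : iIndepFun (fun i (ω : Fin N → S) => Z (ω i)) (Measure.pi fun _ => ν) :=
    iIndepFun_pi fun _ => hZ.aemeasurable
  have hsub (i : Fin N) :
      HasSubgaussianMGF (fun ω : Fin N → S => Z (ω i)) c (Measure.pi fun _ => ν) := by
    refine .of_map (Y := Function.eval i) (measurable_pi_apply i).aemeasurable ?_
    rwa [(measurePreserving_eval (fun _ => ν) i).map_eq]
  simpa [mul_assoc] using
    HasSubgaussianMGF.measure_sum_ge_le_of_iIndepFun hindep (s := univ) (fun i _ => hsub i) ht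

theorem measureReal_pi_abs_mean_sub_integral_gt_le {S : Type*} [MeasurableSpace S]
    (ν : Measure S) [IsProbabilityMeasure ν] {X : S → ℝ} (hXm : Measurable X)
    (hX : ∀ s, X s ∈ Set.Icc 0 1) {N : ℕ} (hN : 0 < N) {t : ℝ} (ht : 0 ≤ t) :
    (Measure.pi fun _ : Fin N => ν).real {ω | t < |(∑ i, X (ω i)) / N - ν[X]|} ≤
      2 * Real.exp (-2 * N * t ^ 2) := by
  have hN' : (0 : ℝ) < N := Nat.cast_pos.2 hN
  have hZ := hasSubgaussianMGF_of_mem_Icc hXm.aemeasurable (ae_of_all ν hX)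
  have hexp : -(N * t) ^ 2 / (2 * N * ((‖(1 : ℝ) - 0‖₊ / 2) ^ 2 : NNReal)) =
      -2 * N * t ^ 2 := by
    norm_num
    field_simp
    ring
  have hsplit : {ω : Fin N → S | t < |(∑ i, X (ω i)) / N - ν[X]|} ⊆
      {ω | N * t ≤ ∑ i, (X (ω i) - ν[X])} ∪ {ω | N * t ≤ ∑ i, -(X (ω i) - ν[X])} := by
    intro ω hω
    have hmean : (∑ i, X (ω i)) / N - ν[X] = (∑ i, (X (ω i) - ν[X])) / N := by
      rw [sum_sub_distrib, sum_const, card_univ, Fintype.card_fin, nsmul_eq_mul]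
      field_simp
    rw [Set.mem_ofPred_eq, hmean, abs_div, abs_of_pos hN', lt_div_iff₀ hN', lt_abs] at hω
    rw [Set.mem_union, Set.mem_ofPred_eq, Set.mem_ofPred_eq, sum_neg_distrib]
    rcases hω with h | h
    · left; linarith
    · right; linarith
  calc _ ≤ _ := measureReal_mono hsplit
    _ ≤ _ := measureReal_union_le _ _
    _ ≤ Real.exp (-2 * N * t ^ 2) + Real.exp (-2 * N * t ^ 2) := by
        rw [← hexp]
        gcongr
        · exact measureReal_pi_sum_ge_le hZ N (by positivity)
        · exact measureReal_pi_sum_ge_le hZ.neg N (by positivity)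
    _ = _ := by ring

theorem one_sub_le_measureReal_pi_forall_abs_mean_sub_integral_le {P S : Type*} [Fintype P]
    [MeasurableSpace S] (ν : Measure S) [IsProbabilityMeasure ν] {X : P → S → ℝ}
    (hXm : ∀ p, Measurable (X p)) (hX : ∀ p s, X p s ∈ Set.Icc 0 1) {N : ℕ} (hN : 0 < N)
    {ε : P → ℝ} (hε : ∀ p, 0 ≤ ε p) {δ : ℝ}
    (hδ : ∑ p, 2 * Real.exp (-2 * N * ε p ^ 2) ≤ δ) :
    1 - δ ≤ (Measure.pi fun _ : Fin N => ν).real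
      {ω | ∀ p, |(∑ i, X p (ω i)) / N - ν[X p]| ≤ ε p} := by
  set μ := Measure.pi fun _ : Fin N => ν
  set good := {ω : Fin N → S | ∀ p, |(∑ i, X p (ω i)) / N - ν[X p]| ≤ ε p}
  have hbad : μ.real goodᶜ ≤ δ :=
    calc μ.real goodᶜ = μ.real (⋃ p, {ω | ε p < |(∑ i, X p (ω i)) / N - ν[X p]|}) := by
          congr 1; ext ω; simp [good]
      _ ≤ ∑ p, μ.real {ω | ε p < |(∑ i, X p (ω i)) / N - ν[X p]|} :=
          measureReal_iUnion_fintype_le _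
      _ ≤ ∑ p, 2 * Real.exp (-2 * N * ε p ^ 2) := sum_le_sum fun p _ =>
          measureReal_pi_abs_mean_sub_integral_gt_le ν (hXm p) (hX p) hN (hε p)
      _ ≤ δ := hδ
  have hcover := measureReal_union_le (μ := μ) good goodᶜ
  rw [Set.union_compl_self, probReal_univ] at hcover
  linarith

section UniformOn

variable {Ω : Type*} [Fintype Ω] [MeasurableSpace Ω] [MeasurableSingletonClass Ω]

theorem measureReal_uniformOn_univ (p : Ω → Prop) :
    (uniformOn Set.univ : Measure Ω).real {x | p x} = Nat.card {x // p x} / Fintype.card Ω := by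
  show _ = (Nat.card ({x | p x} : Set Ω) : ℝ) / _
  rw [measureReal_def, uniformOn_univ, Measure.count_apply_finite _ (Set.toFinite _),
    ENNReal.toReal_div]
  simp [Nat.card_eq_card_finite_toFinset (Set.toFinite {x | p x})]

theorem integral_uniformOn_univ (f : Ω → ℝ) :
    ∫ x, f x ∂(uniformOn Set.univ) = (∑ x, f x) / Fintype.card Ω := by
  rw [integral_fintype .of_finite, sum_div]
  simp [measureReal_def, uniformOn_univ, inv_mul_eq_div]

theorem pi_uniformOn_univ {ι : Type*} [Fintype ι] :
    (Measure.pi fun _ : ι => (uniformOn Set.univ : Measure Ω)) = uniformOn Set.univ := by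
  rw [← uniformOn_pi, Set.pi_univ]

end UniformOn

noncomputable def confidenceRadius (N : ℕ) (δ c : ℝ) : ℝ :=
  √((-2 * c + Real.logb 2 (Real.exp 1) + Real.logb 2 (1 / δ)) / (2 * (N : ℝ)))

theorem confidenceRadius_nonneg (N : ℕ) (δ c : ℝ) : 0 ≤ confidenceRadius N δ c :=
  Real.sqrt_nonneg _

theorem confidenceRadius_antitone (N : ℕ) (δ : ℝ) : Antitone (confidenceRadius N δ) :=
  fun _ _ h => Real.sqrt_le_sqrt (div_le_div_of_nonneg_right (by linarith) (by positivity))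

theorem two_mul_exp_neg_confidenceRadius_sq_le {N : ℕ} (hN : 0 < N) {δ c : ℝ} (hδ0 : 0 < δ)
    (hδ1 : δ ≤ 1) (hc : c ≤ 0) :
    2 * Real.exp (-2 * N * confidenceRadius N δ c ^ 2) ≤ δ * 2 ^ c := by
  have hl2 : 0 < Real.log 2 := Real.log_pos one_lt_two
  have hl2' : Real.log 2 < 1 := Real.log_two_lt_d9.trans (by norm_num)
  have hlδ : Real.log δ ≤ 0 := Real.log_nonpos hδ0.le hδ1
  have hlogb_e : Real.logb 2 (Real.exp 1) = 1 / Real.log 2 := by rw [Real.logb, Real.log_exp]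
  have hlogb_δ : Real.logb 2 (1 / δ) = -(Real.log δ / Real.log 2) := by
    rw [Real.logb, one_div, Real.log_inv, neg_div]
  have hradicand : 0 ≤ -2 * c + Real.logb 2 (Real.exp 1) + Real.logb 2 (1 / δ) := by
    have := Real.logb_nonneg one_lt_two (Real.one_le_exp zero_le_one)
    have := Real.logb_nonneg one_lt_two (one_le_one_div hδ0 hδ1)
    linarith
  have hexponent : -2 * N * confidenceRadius N δ c ^ 2 =
      2 * c - 1 / Real.log 2 + Real.log δ / Real.log 2 := by
    rw [confidenceRadius, Real.sq_sqrt (div_nonneg hradicand (by positivity)), hlogb_e, hlogb_δ]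
    field_simp
    ring
  -- `log 2 < 1` makes each of the three exponents at most its counterpart on the right
  have h1 : Real.log 2 ≤ 1 / Real.log 2 := by rw [le_div_iff₀ hl2]; nlinarith
  have h2 : Real.log δ / Real.log 2 ≤ Real.log δ := by rw [div_le_iff₀ hl2]; nlinarith
  have h3 : 2 * c ≤ Real.log 2 * c := by nlinarith
  calc 2 * Real.exp (-2 * N * confidenceRadius N δ c ^ 2)
      = Real.exp (Real.log 2 + (2 * c - 1 / Real.log 2 + Real.log δ / Real.log 2)) := by
        rw [hexponent, Real.exp_add (Real.log 2), Real.exp_log two_pos]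
    _ ≤ Real.exp (Real.log δ + Real.log 2 * c) := Real.exp_le_exp.2 (by linarith)
    _ = δ * 2 ^ c := by rw [Real.exp_add, Real.exp_log hδ0, Real.rpow_def_of_pos two_pos]

namespace LearningSystem

variable {M S : Type} [AddCommMonoid M] [DecidableEq M] [Fintype S] [DecidableEq S]
  (L : LearningSystem M S)

theorem accuracy_eq_integral [MeasurableSpace S] [MeasurableSingletonClass S]
    (π πs : L.DPolicy) :
    L.accuracy π πs = ∫ s, (if (π s : M) = πs s then 1 else 0) ∂(uniformOn Set.univ) :=
  (integral_uniformOn_univ _).symm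

theorem one_sub_le_measureReal_forall_abs_trainAccuracy_sub_accuracy_le [Nonempty S]
    [MeasurableSpace S] [MeasurableSingletonClass S] (hfs : L.FullSupport) {k : ℕ}
    (e : Fin k ≃ S) (πs : L.DPolicy) {N : ℕ} (hN : 0 < N) {δ : ℝ} (hδ0 : 0 < δ)
    (hδ1 : δ ≤ 1) :
    1 - δ ≤ (uniformOn Set.univ : Measure (Fin N → S)).real {ω | ∀ π : L.DPolicy,
      |L.trainAccuracy ω π πs - L.accuracy π πs| ≤ confidenceRadius N δ (L.coherence e π)} := by
  have hδ : ∑ π : L.DPolicy,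
      2 * Real.exp (-2 * N * confidenceRadius N δ (L.coherence e π) ^ 2) ≤ δ :=
    calc _ ≤ ∑ π : L.DPolicy, δ * 2 ^ L.coherence e π := sum_le_sum fun π _ =>
          two_mul_exp_neg_confidenceRadius_sq_le hN hδ0 hδ1 (L.coherence_nonpos e π)
      _ = δ := by rw [← mul_sum, L.sum_two_rpow_coherence hfs e, mul_one]
  simp only [accuracy_eq_integral]
  rw [← pi_uniformOn_univ (ι := Fin N)]
  have hmeas (π : L.DPolicy) :
      Measurable fun s => if (π s : M) = πs s then (1 : ℝ) else 0 := .of_discrete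
  have hmem (π : L.DPolicy) (s : S) :
      (if (π s : M) = πs s then (1 : ℝ) else 0) ∈ Set.Icc 0 1 := by
    split_ifs <;> simp
  exact one_sub_le_measureReal_pi_forall_abs_mean_sub_integral_le _ hmeas hmem hN
    (fun _ => confidenceRadius_nonneg _ _ _) hδ

end LearningSystem

theorem coherence_regularization_general {M S : Type} [AddCommMonoid M] [DecidableEq M]
    [Fintype S] [DecidableEq S] [Nonempty S] (L : LearningSystem M S)
    (hfs : L.FullSupport) {k : ℕ} (e : Fin k ≃ S) (πs : L.DPolicy)
    (N : ℕ) (hN : 1 ≤ N) (δ : ℝ) (hδ0 : 0 < δ) (hδ1 : δ < 1)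
    (R : Set L.DPolicy)
    (pihat : (Fin N → S) → L.DPolicy)
    (hpihat : ∀ shat : Fin N → S, pihat shat ∈ R ∧ ∀ π ∈ R,
      L.trainAccuracy shat π πs -
          Real.sqrt ((-2 * L.coherence e π + Real.logb 2 (Real.exp 1) +
            Real.logb 2 (1 / δ)) / (2 * (N : ℝ))) ≤
        L.trainAccuracy shat (pihat shat) πs -
          Real.sqrt ((-2 * L.coherence e (pihat shat) + Real.logb 2 (Real.exp 1) +
            Real.logb 2 (1 / δ)) / (2 * (N : ℝ))))
    (pibar : L.DPolicy) (hpibar : pibar ∈ R ∧ ∀ π ∈ R,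
      L.accuracy π πs ≤ L.accuracy pibar πs) :
    1 - δ ≤
      (Nat.card {shat : Fin N → S //
          L.accuracy pibar πs -
              2 * Real.sqrt ((2 * max (-(L.coherence e (pihat shat)))
                  (-(L.coherence e pibar)) + Real.logb 2 (Real.exp 1) +
                Real.logb 2 (1 / δ)) / (2 * (N : ℝ))) ≤
            L.accuracy (pihat shat) πs} : ℝ) /
        ((Fintype.card S : ℝ) ^ N) := by
  let _ : MeasurableSpace S := ⊤
  have hgood := L.one_sub_le_measureReal_forall_abs_trainAccuracy_sub_accuracy_le hfs e πs
    (N := N) hN hδ0 hδ1.le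
  have hcard : (Fintype.card S : ℝ) ^ N = Fintype.card (Fin N → S) := by simp
  rw [hcard, ← measureReal_uniformOn_univ]
  refine hgood.trans (measureReal_mono fun ω hω => ?_)
  have hhat := (abs_le.1 (hω (pihat ω))).2
  have hbar := (abs_le.1 (hω pibar)).1
  have hreg : L.trainAccuracy ω pibar πs - confidenceRadius N δ (L.coherence e pibar) ≤
      L.trainAccuracy ω (pihat ω) πs - confidenceRadius N δ (L.coherence e (pihat ω)) :=
    (hpihat ω).2 pibar hpibar.1
  have hrad := confidenceRadius_antitone N δ
    (min_le_right (L.coherence e (pihat ω)) (L.coherence e pibar))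
  rw [Set.mem_ofPred_eq, max_neg_neg, mul_neg, ← neg_mul]
  change _ - 2 * confidenceRadius N δ (min _ _) ≤ _
  linarith

/-- Coherence regularization corollary: let `R` be a nonempty set of d-policies, let
`π̂` (a function of the training draw) maximize the regularized training accuracy over
`R`, and let `π̄` maximize the true accuracy over `R`. Then with probability at least
`1 − δ` over the i.i.d. uniform draw of the training contexts,
`α(π̂;π*) ≥ α(π̄;π*) − 2√((2 max(−χ(π̂), −χ(π̄)) + log₂ e + log₂(1/δ))/(2N))`. -/
theorem coherence_regularization {M S : Type} [AddCommMonoid M] [DecidableEq M]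
    [Fintype S] [DecidableEq S] [Nonempty S] (L : LearningSystem M S)
    (hfs : L.FullSupport) {k : ℕ} (e : Fin k ≃ S) (πs : L.DPolicy)
    (N : ℕ) (hN : 1 ≤ N) (δ : ℝ) (hδ0 : 0 < δ) (hδ1 : δ < 1)
    (R : Set L.DPolicy) (hR : R.Nonempty)
    (pihat : (Fin N → S) → L.DPolicy)
    (hpihat : ∀ shat : Fin N → S, pihat shat ∈ R ∧ ∀ π ∈ R,
      L.trainAccuracy shat π πs -
          Real.sqrt ((-2 * L.coherence e π + Real.logb 2 (Real.exp 1) +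
            Real.logb 2 (1 / δ)) / (2 * (N : ℝ))) ≤
        L.trainAccuracy shat (pihat shat) πs -
          Real.sqrt ((-2 * L.coherence e (pihat shat) + Real.logb 2 (Real.exp 1) +
            Real.logb 2 (1 / δ)) / (2 * (N : ℝ))))
    (pibar : L.DPolicy) (hpibar : pibar ∈ R ∧ ∀ π ∈ R,
      L.accuracy π πs ≤ L.accuracy pibar πs) :
    1 - δ ≤
      (Nat.card {shat : Fin N → S //
          L.accuracy pibar πs -
              2 * Real.sqrt ((2 * max (-(L.coherence e (pihat shat)))
                  (-(L.coherence e pibar)) + Real.logb 2 (Real.exp 1) +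
                Real.logb 2 (1 / δ)) / (2 * (N : ℝ))) ≤
            L.accuracy (pihat shat) πs} : ℝ) /
        ((Fintype.card S : ℝ) ^ N) :=
  coherence_regularization_general L hfs e πs N hN δ hδ0 hδ1 R pihat hpihat pibar hpibar
end

section
/- The regularized maximizer has coherence at least that of the ground truth: assume σ has full support. Fix any prior policy φ ∈ M, any N ≥ 1, any fixed training contexts ŝ₁,…,ŝ_N in S, and any constant c ∈ ℝ such that −2χ_φ(π) + c ≥ 0 for all d-policies π. If π̂ maximizes over all d-policies the objective α_train(π;π*) − √((−2χ_φ(π) + c)/(2N)), then χ_φ(π̂) ≥ χ_φ(π*). -/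
open Finset

/-!
The ground truth `π*` has training accuracy `1`, which no d-policy exceeds. So if `π̂`
maximizes accuracy minus the regularizer `√((c - 2χ)/(2N))`, its regularizer cannot exceed
that of `π*`; since the regularizer is increasing in `-χ`, this gives `χ(π*) ≤ χ(π̂)`.
-/

namespace LearningSystem

variable {M S : Type} [AddCommMonoid M] [DecidableEq M] [Fintype S] [DecidableEq S]
  (L : LearningSystem M S) {N : ℕ} (shat : Fin N → S)

theorem trainAccuracy_self (πs : L.DPolicy) (hN : 1 ≤ N) : L.trainAccuracy shat πs πs = 1 := by
  have hNpos : (N : ℝ) ≠ 0 := by positivity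
  simp [trainAccuracy, hNpos]

theorem trainAccuracy_le_one (π πs : L.DPolicy) : L.trainAccuracy shat π πs ≤ 1 := by
  unfold trainAccuracy
  apply div_le_one_of_le₀ _ (Nat.cast_nonneg N)
  calc (∑ i : Fin N, if (π (shat i) : M) = πs (shat i) then (1 : ℝ) else 0)
      ≤ ∑ _i : Fin N, (1 : ℝ) := Finset.sum_le_sum fun i _ => by split_ifs <;> norm_num
    _ = N := by simp

end LearningSystem

theorem Real.le_of_one_sub_sqrt_le_sub_sqrt {a x y : ℝ} (ha : a ≤ 1) (hx : 0 ≤ x)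
    (h : 1 - √x ≤ a - √y) : y ≤ x :=
  (Real.sqrt_le_sqrt_iff hx).mp (by linarith)

theorem regularized_maximizer_coherence_ge_general {M S : Type} [AddCommMonoid M] [DecidableEq M]
    [Fintype S] [DecidableEq S] (L : LearningSystem M S)
    (φ : M) {k : ℕ} (e : Fin k ≃ S) (πs : L.DPolicy)
    (N : ℕ) (hN : 1 ≤ N) (shat : Fin N → S) (c : ℝ)
    (hc : ∀ π : L.DPolicy, 0 ≤ -2 * L.cohAlong φ π ⇑e + c)
    (pihat : L.DPolicy)
    (hmax : ∀ π : L.DPolicy,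
      L.trainAccuracy shat π πs -
          Real.sqrt ((-2 * L.cohAlong φ π ⇑e + c) / (2 * (N : ℝ))) ≤
        L.trainAccuracy shat pihat πs -
          Real.sqrt ((-2 * L.cohAlong φ pihat ⇑e + c) / (2 * (N : ℝ)))) :
    L.cohAlong φ πs ⇑e ≤ L.cohAlong φ pihat ⇑e := by
  have hNpos : (0 : ℝ) < 2 * N := by positivity
  have h := hmax πs
  rw [L.trainAccuracy_self shat πs hN] at h
  have hle := Real.le_of_one_sub_sqrt_le_sub_sqrt (L.trainAccuracy_le_one shat pihat πs)
    (div_nonneg (hc πs) hNpos.le) h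
  rw [div_le_div_iff_of_pos_right hNpos] at hle
  linarith

/-- The regularized maximizer has coherence at least that of the ground truth: for any
prior policy `φ`, any fixed training contexts `ŝ₁,…,ŝ_N`, and any constant `c` with
`−2χ_φ(π) + c ≥ 0` for all `π`, if `π̂` maximizes
`α_train(π;π*) − √((−2χ_φ(π) + c)/(2N))` over all d-policies, then
`χ_φ(π̂) ≥ χ_φ(π*)`. -/
theorem regularized_maximizer_coherence_ge {M S : Type} [AddCommMonoid M] [DecidableEq M]
    [Fintype S] [DecidableEq S] [Nonempty S] (L : LearningSystem M S)
    (hfs : L.FullSupport) (φ : M) {k : ℕ} (e : Fin k ≃ S) (πs : L.DPolicy)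
    (N : ℕ) (hN : 1 ≤ N) (shat : Fin N → S) (c : ℝ)
    (hc : ∀ π : L.DPolicy, 0 ≤ -2 * L.cohAlong φ π ⇑e + c)
    (pihat : L.DPolicy)
    (hmax : ∀ π : L.DPolicy,
      L.trainAccuracy shat π πs -
          Real.sqrt ((-2 * L.cohAlong φ π ⇑e + c) / (2 * (N : ℝ))) ≤
        L.trainAccuracy shat pihat πs -
          Real.sqrt ((-2 * L.cohAlong φ pihat ⇑e + c) / (2 * (N : ℝ)))) :
    L.cohAlong φ πs ⇑e ≤ L.cohAlong φ pihat ⇑e :=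
  regularized_maximizer_coherence_ge_general L φ e πs N hN shat c hc pihat hmax
end

section
/- Simple bootstrap at β = 1 exactly samples the softmax over coherence: assume σ has full support. Consider the simple bootstrap procedure that, given the enumeration s₁,…,s_k of S, sequentially samples a_n ∈ A_{s_n} with probability σ(Σ_{m=1}^{n-1} a_m, s_n)(a_n) for n = 1,…,k, producing the d-policy π with π(s_n) = a_n. Then for every d-policy π, the probability that the procedure produces π equals Π_{n=1}^{k} σ(Σ_{m=1}^{n-1} π(s_m), s_n)(π(s_n)) = 2^{χ(π)} = X^1(π); that is, the simple bootstrap distribution at inverse temperature β = 1 coincides with the softmax over coherence X^1. -/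
open Finset

section Aux

variable {M : Type} [AddCommMonoid M]

lemma filter_lt_castSucc_sum {k : ℕ} (h : Fin (k + 1) → M) (i : Fin k) :
    ∑ m ∈ univ.filter (fun m => m < Fin.castSucc i), h m
      = ∑ m ∈ univ.filter (fun m => m < i), h (Fin.castSucc m) := by
  rw [Finset.sum_filter, Finset.sum_filter, Fin.sum_univ_castSucc]
  simp [Fin.castSucc_lt_castSucc_iff, not_lt.mpr (Fin.le_last _)]

lemma filter_lt_last_sum {k : ℕ} (h : Fin (k + 1) → M) :
    ∑ m ∈ univ.filter (fun m => m < Fin.last k), h m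
      = ∑ m : Fin k, h (Fin.castSucc m) := by
  rw [Finset.sum_filter, Fin.sum_univ_castSucc]
  simp [Fin.castSucc_lt_last]

lemma sum_prod_eq_one : ∀ (k : ℕ) (B : Fin k → Finset M) (p : Fin k → M → M → ℝ),
    (∀ n φ, ∑ a ∈ B n, p n φ a = 1) → ∀ φ : M,
    ∑ g : (∀ n : Fin k, {a : M // a ∈ B n}),
      ∏ n, p n (φ + ∑ m ∈ univ.filter (fun m => m < n), ((g m : M))) ((g n : M)) = 1 := by
  intro k
  induction k with
  | zero => intro B p h φ; simp
  | succ k ih =>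
    intro B p h φ
    rw [← (Fin.snocEquiv (fun n => {a : M // a ∈ B n})).sum_comp]
    rw [Fintype.sum_prod_type]
    rw [Finset.sum_comm]
    have key : ∀ (g : ∀ n : Fin k, {a : M // a ∈ B (Fin.castSucc n)})
        (a : {a : M // a ∈ B (Fin.last k)}),
        (∏ n : Fin (k+1), p n (φ + ∑ m ∈ univ.filter (fun m => m < n),
            ((Fin.snocEquiv (fun n => {a : M // a ∈ B n}) (a, g) m : M)))
          ((Fin.snocEquiv (fun n => {a : M // a ∈ B n}) (a, g) n : M))
        = (∏ n : Fin k, p (Fin.castSucc n)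
            (φ + ∑ m ∈ univ.filter (fun m => m < n), ((g m : M))) ((g n : M)))
          * p (Fin.last k) (φ + ∑ m : Fin k, ((g m : M))) ((a : M))) := by
      intro g a
      rw [Fin.prod_univ_castSucc]
      congr 1
      · refine Finset.prod_congr rfl fun n _ => ?_
        rw [filter_lt_castSucc_sum]
        simp [Fin.snocEquiv]
      · rw [filter_lt_last_sum]
        simp [Fin.snocEquiv]
    calc ∑ g : (∀ n : Fin k, {a : M // a ∈ B (Fin.castSucc n)}),
          ∑ a : {a : M // a ∈ B (Fin.last k)},
          ∏ n : Fin (k+1), p n (φ + ∑ m ∈ univ.filter (fun m => m < n),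
              ((Fin.snocEquiv (fun n => {a : M // a ∈ B n}) (a, g) m : M)))
            ((Fin.snocEquiv (fun n => {a : M // a ∈ B n}) (a, g) n : M))
        = ∑ g : (∀ n : Fin k, {a : M // a ∈ B (Fin.castSucc n)}),
          (∏ n : Fin k, p (Fin.castSucc n)
            (φ + ∑ m ∈ univ.filter (fun m => m < n), ((g m : M))) ((g n : M))) := by
          refine Finset.sum_congr rfl fun g _ => ?_
          rw [Finset.sum_congr rfl fun a _ => key g a, ← Finset.mul_sum,
            Finset.sum_coe_sort (B (Fin.last k)) (p (Fin.last k) _),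
            h (Fin.last k), mul_one]
      _ = 1 := ih (fun n => B (Fin.castSucc n)) (fun n => p (Fin.castSucc n))
            (fun n => h (Fin.castSucc n)) φ

end Aux

/-- Simple bootstrap at `β = 1` exactly samples the softmax over coherence: if `σ` has
full support, the probability that the sequential bootstrap procedure produces the
d-policy `π`, namely `∏ n σ(∑_{m<n} π(s_m), s_n)(π(s_n))`, equals `2^(χ(π))` and
equals `X¹(π)`. -/
theorem simple_bootstrap_eq_softmax {M S : Type} [AddCommMonoid M] [Fintype S]
    [DecidableEq S] [Nonempty S] (L : LearningSystem M S) (hfs : L.FullSupport)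
    {k : ℕ} (e : Fin k ≃ S) (π : L.DPolicy) :
    L.prodAlong 0 π ⇑e = (2 : ℝ) ^ (L.coherence e π) ∧
    L.prodAlong 0 π ⇑e = L.softmaxCoh e 1 π := by
  have h1 : ∀ π' : L.DPolicy, L.prodAlong 0 π' ⇑e = (2 : ℝ) ^ (L.coherence e π') := by
    intro π'
    rw [LearningSystem.coherence, LearningSystem.cohAlong,
      Real.rpow_sum_of_pos (by norm_num : (0:ℝ) < 2), LearningSystem.prodAlong]
    exact Finset.prod_congr rfl fun n _ =>
      (Real.rpow_logb (by norm_num) (by norm_num) (hfs _ (e n) _ (π' (e n)).2)).symm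
  have hsum : ∑ π' : L.DPolicy, L.prodAlong 0 π' ⇑e = 1 := by
    rw [← (Equiv.piCongrLeft (fun s => {a : M // a ∈ L.A s}) e).sum_comp]
    have := sum_prod_eq_one k (fun n => L.A (e n)) (fun n φ a => L.inf φ (e n) a)
      (fun n φ => L.inf_sum_one φ (e n)) 0
    rw [← this]
    refine Finset.sum_congr rfl fun g _ => ?_
    rw [LearningSystem.prodAlong]
    refine Finset.prod_congr rfl fun n _ => ?_
    simp only [Equiv.piCongrLeft_apply_apply, zero_add]
  refine ⟨h1 π, ?_⟩
  rw [LearningSystem.softmaxCoh, h1 π, one_mul]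
  rw [Finset.sum_congr rfl fun π' _ => (congrArg _ (one_mul _)).trans (h1 π').symm, hsum, div_one]
end
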